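/- arXiv:1105.3638 — 2 statements merged into one kernel-verified Lean document; each statement's English description precedes it below -/
import Mathlib

section
/- For any positive definite real d×d matrix A, the Lyapunov equation AY + YA = B has a unique solution, which can be represented as Y = ∫₀^∞ exp(−vA) B exp(−vA) dv. -/
open Matrix MeasureTheory Set

/-!
Diagonalise `A = U * diagonal μ * Uᵀ` with `U` orthogonal and all `μ i > 0`. Conjugation by `U`
turns both the Lyapunov operator `Y ↦ A * Y + Y * A` and the integrand into their diagonal
versions, where everything is entrywise: the operator multiplies entry `(i, j)` by `μ i + μ j`,
and the integrand's entry `(i, j)` is `exp (-(μ i + μ j) v)` times a constant, whose integral over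
`(0, ∞)` is `(μ i + μ j)⁻¹` times it. Hence the integral solves the equation for every `B`, so the
Lyapunov operator is a surjective endomorphism of a finite-dimensional space, hence bijective.
-/

lemma integral_exp_neg_mul_Ioi_zero {c : ℝ} (hc : 0 < c) :
    ∫ v in Ioi (0 : ℝ), Real.exp (-v * c) = c⁻¹ := by
  simpa [mul_comm] using integral_exp_mul_Ioi (neg_lt_zero.2 hc) 0

lemma integrableOn_exp_neg_mul_Ioi_zero {c : ℝ} (hc : 0 < c) :
    IntegrableOn (fun v => Real.exp (-v * c)) (Ioi 0) := by
  simpa [mul_comm] using integrableOn_exp_mul_Ioi (neg_lt_zero.2 hc) 0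

namespace Matrix

section Lyapunov

variable {n R : Type*} [Fintype n] [DecidableEq n]

def lyapunovMap [CommSemiring R] (A : Matrix n n R) : Matrix n n R →ₗ[R] Matrix n n R :=
  LinearMap.mulLeft R A + LinearMap.mulRight R A

@[simp]
lemma lyapunovMap_apply [CommSemiring R] (A Y : Matrix n n R) :
    lyapunovMap A Y = A * Y + Y * A :=
  rfl

lemma lyapunovMap_diagonal [CommSemiring R] (μ : n → R) (Y : Matrix n n R) :
    lyapunovMap (diagonal μ) Y = of fun i j => (μ i + μ j) * Y i j := by
  ext i j
  simp only [lyapunovMap_apply, add_apply, diagonal_mul, mul_diagonal, of_apply]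
  ring

lemma lyapunovMap_diagonal_inv_mul [Field R] {μ : n → R} (hμ : ∀ i j, μ i + μ j ≠ 0)
    (C : Matrix n n R) : lyapunovMap (diagonal μ) (of fun i j => (μ i + μ j)⁻¹ * C i j) = C := by
  rw [lyapunovMap_diagonal]
  ext i j
  simp [← mul_assoc, mul_inv_cancel₀ (hμ i j)]

lemma lyapunovMap_conj [CommSemiring R] {U V : Matrix n n R} (hVU : V * U = 1)
    (D Y : Matrix n n R) :
    lyapunovMap (U * D * V) (U * Y * V) = U * lyapunovMap D Y * V := by
  simp only [lyapunovMap_apply, Matrix.mul_add, Matrix.add_mul, Matrix.mul_assoc]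
  simp only [← Matrix.mul_assoc V U, hVU, Matrix.one_mul]

end Lyapunov

lemma of_integral_mul_mul_apply {α 𝕜 l m n p : Type*} [MeasurableSpace α] {ν : Measure α}
    [RCLike 𝕜] [Fintype m] [Fintype n] (U : Matrix l m 𝕜) (M : α → Matrix m n 𝕜) (V : Matrix n p 𝕜)
    (hM : ∀ i j, Integrable (fun x => M x i j) ν) :
    (of fun i j => ∫ x, (U * M x * V) i j ∂ν) = U * (of fun i j => ∫ x, M x i j ∂ν) * V := by
  ext i j
  simp only [of_apply, mul_apply, Finset.sum_mul]
  rw [integral_finsetSum _ fun k _ => integrable_finsetSum _ fun l _ =>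
    ((hM l k).const_mul _).mul_const _]
  refine Finset.sum_congr rfl fun k _ => ?_
  rw [integral_finsetSum _ fun l _ => ((hM l k).const_mul _).mul_const _]
  simp only [integral_mul_const, integral_const_mul]

variable {n : Type*} [Fintype n] [DecidableEq n]

lemma exp_conj_diagonal {U : Matrix n n ℝ} (hU : U ∈ unitaryGroup n ℝ) (f : n → ℝ) :
    NormedSpace.exp (U * diagonal f * star U) =
      U * diagonal (fun i => Real.exp (f i)) * star U := by
  have hinv : U⁻¹ = star U := inv_eq_left_inv (Unitary.star_mul_self_of_mem hU)
  rw [← hinv, exp_conj U _ (Unitary.isUnit_coe (U := ⟨U, hU⟩)), exp_diagonal, Pi.exp_def,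
    ← Real.exp_eq_exp_ℝ]

lemma exp_smul_of_eq_conj_diagonal {A U : Matrix n n ℝ} {μ : n → ℝ} (hU : U ∈ unitaryGroup n ℝ)
    (hA : A = U * diagonal μ * star U) (t : ℝ) :
    NormedSpace.exp (t • A) = U * diagonal (fun i => Real.exp (t * μ i)) * star U := by
  have hsmul : t • A = U * diagonal (fun i => t * μ i) * star U := by
    rw [hA, ← Matrix.smul_mul, ← Matrix.mul_smul, ← diagonal_smul]
    rfl
  rw [hsmul, exp_conj_diagonal hU]

lemma exp_smul_mul_mul_exp_smul_of_eq_conj_diagonal {A U : Matrix n n ℝ} {μ : n → ℝ}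
    (hU : U ∈ unitaryGroup n ℝ) (hA : A = U * diagonal μ * star U) (t : ℝ) (B : Matrix n n ℝ) :
    NormedSpace.exp (t • A) * B * NormedSpace.exp (t • A) =
      U * (of fun i j => Real.exp (t * (μ i + μ j)) * (star U * B * U) i j) * star U := by
  have hsandwich : ∀ D : Matrix n n ℝ,
      U * D * star U * B * (U * D * star U) = U * (D * (star U * B * U) * D) * star U := by
    intro D
    simp only [Matrix.mul_assoc]
  rw [exp_smul_of_eq_conj_diagonal hU hA, hsandwich]
  congr 2
  ext i j
  simp only [diagonal_mul, mul_diagonal, of_apply, mul_add, Real.exp_add]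
  ring

lemma integral_exp_neg_smul_mul_mul_of_eq_conj_diagonal {A U : Matrix n n ℝ} {μ : n → ℝ}
    (hU : U ∈ unitaryGroup n ℝ) (hA : A = U * diagonal μ * star U) (hμ : ∀ i, 0 < μ i)
    (B : Matrix n n ℝ) :
    (of fun i j => ∫ v in Ioi (0 : ℝ),
        (NormedSpace.exp (-(v • A)) * B * NormedSpace.exp (-(v • A))) i j) =
      U * (of fun i j => (μ i + μ j)⁻¹ * (star U * B * U) i j) * star U := by
  have hμμ : ∀ i j, 0 < μ i + μ j := fun i j => add_pos (hμ i) (hμ j)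
  simp_rw [← neg_smul, exp_smul_mul_mul_exp_smul_of_eq_conj_diagonal hU hA]
  rw [of_integral_mul_mul_apply]
  · congr 2
    ext i j
    simp only [of_apply]
    rw [integral_mul_const, integral_exp_neg_mul_Ioi_zero (hμμ i j)]
  · intro i j
    exact (integrableOn_exp_neg_mul_Ioi_zero (hμμ i j)).mul_const _

lemma lyapunovMap_integral_of_eq_conj_diagonal {A U : Matrix n n ℝ} {μ : n → ℝ}
    (hU : U ∈ unitaryGroup n ℝ) (hA : A = U * diagonal μ * star U) (hμ : ∀ i, 0 < μ i)
    (B : Matrix n n ℝ) :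
    lyapunovMap A (of fun i j => ∫ v in Ioi (0 : ℝ),
        (NormedSpace.exp (-(v • A)) * B * NormedSpace.exp (-(v • A))) i j) = B := by
  rw [integral_exp_neg_smul_mul_mul_of_eq_conj_diagonal hU hA hμ, hA,
    lyapunovMap_conj (Unitary.star_mul_self_of_mem hU),
    lyapunovMap_diagonal_inv_mul fun i j => (add_pos (hμ i) (hμ j)).ne']
  simp only [← Matrix.mul_assoc, Unitary.mul_star_self_of_mem hU, Matrix.one_mul]
  rw [Matrix.mul_assoc, Unitary.mul_star_self_of_mem hU, Matrix.mul_one]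

lemma PosDef.lyapunovMap_integral {A : Matrix n n ℝ} (hA : A.PosDef) (B : Matrix n n ℝ) :
    lyapunovMap A (of fun i j => ∫ v in Ioi (0 : ℝ),
        (NormedSpace.exp (-(v • A)) * B * NormedSpace.exp (-(v • A))) i j) = B :=
  lyapunovMap_integral_of_eq_conj_diagonal hA.1.eigenvectorUnitary.2
    (by simpa using hA.1.spectral_theorem) hA.eigenvalues_pos B

end Matrix

/-- For any symmetric positive definite real `d × d` matrix `A` and any
`d × d` matrix `B`, the Lyapunov equation `A * Y + Y * A = B` has a unique solution, and the
matrix `∫ v in (0,∞), exp (-v • A) * B * exp (-v • A) dv` (entrywise improper integral) is a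
solution (hence the solution). -/
theorem lyapunov_unique_solution_integral_repr
    {d : ℕ} (A B : Matrix (Fin d) (Fin d) ℝ) (hA : A.PosDef) :
    (∃! Y : Matrix (Fin d) (Fin d) ℝ, A * Y + Y * A = B) ∧
      (A * (Matrix.of fun i j =>
          ∫ v in Set.Ioi (0 : ℝ),
            (NormedSpace.exp (-(v • A)) * B * NormedSpace.exp (-(v • A))) i j) +
        (Matrix.of fun i j =>
          ∫ v in Set.Ioi (0 : ℝ),
            (NormedSpace.exp (-(v • A)) * B * NormedSpace.exp (-(v • A))) i j) * A = B) := by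
  have hsurj : Function.Surjective (lyapunovMap A) := fun C => ⟨_, hA.lyapunovMap_integral C⟩
  have hbij : Function.Bijective (lyapunovMap A) :=
    ⟨LinearMap.injective_iff_surjective.2 hsurj, hsurj⟩
  exact ⟨hbij.existsUnique B, hA.lyapunovMap_integral B⟩
end

section
/- For positive definite d×d matrices A and B whose smallest eigenvalues are bounded below by c > 0, there is a constant C depending only on d and c such that ‖A^{-1/2} − B^{-1/2}‖ ≤ C · (max{‖A‖, ‖B‖})^{1/2} · ‖A^{-1}‖ · ‖B^{-1}‖ · ‖A − B‖. -/
open Matrix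

attribute [local instance] Matrix.frobeniusNormedAddCommGroup Matrix.frobeniusNormedSpace

/-- The positive semidefinite square root of a positive semidefinite matrix
(as defined in Mathlib of December 2024, since removed). -/
noncomputable def Matrix.PosSemidef.sqrt {n 𝕜 : Type*} [RCLike 𝕜] [PartialOrder 𝕜] [StarOrderedRing 𝕜] [Fintype n] [DecidableEq n]
    {A : Matrix n n 𝕜} (hA : A.PosSemidef) : Matrix n n 𝕜 :=
  hA.1.eigenvectorUnitary.1 * diagonal ((↑) ∘ (√·) ∘ hA.1.eigenvalues) *
  (star hA.1.eigenvectorUnitary : Matrix n n 𝕜)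

/-!
Write `S = A^{1/2}` and `T = B^{1/2}`. Then `S⁻¹ - T⁻¹ = S⁻¹ (T - S) T⁻¹`, and
`‖S⁻¹‖² = tr A⁻¹ ≤ √d ‖A⁻¹‖`. The difference `X = T - S` solves the Sylvester equation
`T X + X S = B - A`; pairing it with `X` in the trace inner product and using the Loewner bounds
`S ≥ ‖A⁻¹‖^{-1/2}` (each eigenvalue `λ` of `A` has `λ⁻¹ ≤ ‖A⁻¹‖`, as `λ⁻¹` is one of `A⁻¹`)
and `T ≥ 0` gives `‖T - S‖ ≤ ‖A⁻¹‖^{1/2} ‖A - B‖`. Finally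
`‖B‖ ‖B⁻¹‖ ≥ ‖1‖ ≥ 1` turns the leftover factor `‖B⁻¹‖^{1/2}` into `‖B‖^{1/2} ‖B⁻¹‖`,
so `C = √d` works.
-/

open scoped MatrixOrder

namespace Matrix

variable {n : Type*} [Fintype n]

lemma trace_conjTranspose_mul_eq_sum (X Y : Matrix n n ℝ) :
    (Xᴴ * Y).trace = ∑ i, ∑ j, X i j * Y i j := by
  simp only [trace, diag, mul_apply, conjTranspose_apply, star_trivial]
  exact Finset.sum_comm

lemma frobenius_norm_sq_eq_trace (X : Matrix n n ℝ) : ‖X‖ ^ 2 = (Xᴴ * X).trace := by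
  rw [trace_conjTranspose_mul_eq_sum, frobenius_norm_def, ← Real.sqrt_eq_rpow,
    Real.sq_sqrt (by positivity)]
  simp [sq]

lemma trace_conjTranspose_mul_le (X Y : Matrix n n ℝ) : (Xᴴ * Y).trace ≤ ‖X‖ * ‖Y‖ := by
  refine (le_abs_self _).trans (abs_le_of_sq_le_sq ?_ (by positivity))
  rw [mul_pow, frobenius_norm_sq_eq_trace, frobenius_norm_sq_eq_trace]
  simp only [trace_conjTranspose_mul_eq_sum, ← Finset.sum_product']
  simpa [sq] using Finset.sum_mul_sq_le_sq_mul_sq (Finset.univ ×ˢ Finset.univ)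
    (fun p : n × n => X p.1 p.2) (fun p => Y p.1 p.2)

lemma norm_le_norm_of_mulVec_eq_smul {𝕜 : Type*} [RCLike 𝕜] {M : Matrix n n 𝕜}
    {v : n → 𝕜} {μ : 𝕜} (hv : v ≠ 0) (h : M *ᵥ v = μ • v) : ‖μ‖ ≤ ‖M‖ := by
  have hcol : 0 < ‖replicateCol Unit v‖ := by
    rwa [norm_pos_iff, Ne, replicateCol_eq_zero]
  refine le_of_mul_le_mul_right ?_ hcol
  calc ‖μ‖ * ‖replicateCol Unit v‖ = ‖M * replicateCol Unit v‖ := by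
        rw [← replicateCol_mulVec, h, replicateCol_smul, norm_smul]
    _ ≤ ‖M‖ * ‖replicateCol Unit v‖ := frobenius_norm_mul _ _

variable [DecidableEq n]

lemma frobenius_norm_one : ‖(1 : Matrix n n ℝ)‖ = √(Fintype.card n) := by
  simpa using congrArg NNReal.toReal (frobenius_nnnorm_one (n := n) (α := ℝ))

lemma trace_le_sqrt_card_mul_norm (M : Matrix n n ℝ) : M.trace ≤ √(Fintype.card n) * ‖M‖ := by
  simpa [frobenius_norm_one] using trace_conjTranspose_mul_le 1 M

lemma one_le_norm_mul_norm_inv [Nonempty n] {A : Matrix n n ℝ} (hA : IsUnit A) :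
    1 ≤ ‖A‖ * ‖A⁻¹‖ :=
  calc (1 : ℝ) ≤ √(Fintype.card n) := Real.one_le_sqrt.mpr (by simp [Nat.one_le_iff_ne_zero])
    _ = ‖A * A⁻¹‖ := by
        rw [mul_nonsing_inv _ ((isUnit_iff_isUnit_det A).mp hA), frobenius_norm_one]
    _ ≤ ‖A‖ * ‖A⁻¹‖ := frobenius_norm_mul _ _

lemma sqrt_norm_inv_le_sqrt_norm_mul_norm_inv [Nonempty n] {A : Matrix n n ℝ} (hA : IsUnit A) :
    √‖A⁻¹‖ ≤ √‖A‖ * ‖A⁻¹‖ :=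
  calc √‖A⁻¹‖ = √‖A⁻¹‖ * 1 := (mul_one _).symm
    _ ≤ √‖A⁻¹‖ * √(‖A‖ * ‖A⁻¹‖) := by
        gcongr
        exact Real.one_le_sqrt.mpr (one_le_norm_mul_norm_inv hA)
    _ = √‖A‖ * ‖A⁻¹‖ := by
        rw [Real.sqrt_mul (norm_nonneg _), mul_left_comm, Real.mul_self_sqrt (norm_nonneg _)]

lemma mul_norm_sq_le_trace_conjTranspose_mul_mul {S : Matrix n n ℝ} {s : ℝ} (hS : s • 1 ≤ S)
    (X : Matrix n n ℝ) : s * ‖X‖ ^ 2 ≤ (Xᴴ * S * X).trace := by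
  have h := (le_iff.mp hS).conjTranspose_mul_mul_same X |>.trace_nonneg
  rwa [mul_sub, sub_mul, mul_smul_comm, smul_mul_assoc, mul_one, trace_sub, trace_smul,
    smul_eq_mul, sub_nonneg, ← frobenius_norm_sq_eq_trace] at h

lemma add_mul_norm_sub_le_norm_mul_self_sub_mul_self {S T : Matrix n n ℝ} {s t : ℝ}
    (hS : s • 1 ≤ S) (hT : t • 1 ≤ T) : (s + t) * ‖T - S‖ ≤ ‖T * T - S * S‖ := by
  set X := T - S
  have hXS : s * ‖X‖ ^ 2 ≤ (Xᴴ * X * S).trace := by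
    have h := mul_norm_sq_le_trace_conjTranspose_mul_mul hS Xᴴ
    rwa [conjTranspose_conjTranspose, frobenius_norm_conjTranspose, trace_mul_cycle] at h
  have key : (s + t) * ‖X‖ * ‖X‖ ≤ ‖T * T - S * S‖ * ‖X‖ :=
    calc (s + t) * ‖X‖ * ‖X‖ = s * ‖X‖ ^ 2 + t * ‖X‖ ^ 2 := by ring
      _ ≤ (Xᴴ * X * S).trace + (Xᴴ * T * X).trace :=
          add_le_add hXS (mul_norm_sq_le_trace_conjTranspose_mul_mul hT X)
      _ = (Xᴴ * (T * T - S * S)).trace := by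
          rw [← trace_add]
          congr 1
          simp only [X]
          noncomm_ring
      _ ≤ ‖X‖ * ‖T * T - S * S‖ := trace_conjTranspose_mul_le _ _
      _ = ‖T * T - S * S‖ * ‖X‖ := mul_comm _ _
  rcases (norm_nonneg X).eq_or_lt with hX | hX
  · rw [← hX, mul_zero]
    positivity
  · exact le_of_mul_le_mul_right key hX

lemma PosSemidef.sqrt_eq_cfcSqrt {A : Matrix n n ℝ} (hA : A.PosSemidef) :
    hA.sqrt = CFC.sqrt A := by
  rw [CFC.sqrt_eq_real_sqrt A hA.nonneg, cfcₙ_eq_cfc, hA.1.cfc_eq]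
  rfl

lemma frobenius_norm_cfcSqrt_sq {M : Matrix n n ℝ} (hM : 0 ≤ M) :
    ‖CFC.sqrt M‖ ^ 2 = M.trace := by
  rw [frobenius_norm_sq_eq_trace, (CFC.sqrt_nonneg M).posSemidef.isHermitian.eq,
    CFC.sqrt_mul_sqrt_self M hM]

lemma PosDef.norm_inv_cfcSqrt_sq_le {A : Matrix n n ℝ} (hA : A.PosDef) :
    ‖(CFC.sqrt A)⁻¹‖ ^ 2 ≤ √(Fintype.card n) * ‖A⁻¹‖ := by
  rw [hA.posSemidef.inv_sqrt, frobenius_norm_cfcSqrt_sq hA.inv.posSemidef.nonneg]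
  exact trace_le_sqrt_card_mul_norm _

lemma PosDef.inv_eigenvalues_le_norm_inv {A : Matrix n n ℝ} (hA : A.PosDef) (i : n) :
    (hA.1.eigenvalues i)⁻¹ ≤ ‖A⁻¹‖ := by
  set v := ⇑(hA.1.eigenvectorBasis i)
  set μ := hA.1.eigenvalues i
  have hμ : 0 < μ := hA.eigenvalues_pos i
  have hv : v ≠ 0 := by
    simpa [v] using hA.1.eigenvectorBasis.orthonormal.ne_zero i
  have h : A⁻¹ *ᵥ v = μ⁻¹ • v := by
    rw [eq_inv_smul_iff₀ hμ.ne', ← mulVec_smul, ← hA.1.mulVec_eigenvectorBasis i, mulVec_mulVec,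
      nonsing_inv_mul _ ((isUnit_iff_isUnit_det A).mp hA.isUnit), one_mulVec]
  simpa [abs_of_pos hμ] using norm_le_norm_of_mulVec_eq_smul hv h

lemma PosDef.inv_sqrt_norm_inv_smul_one_le_cfcSqrt {A : Matrix n n ℝ} (hA : A.PosDef) :
    (√‖A⁻¹‖)⁻¹ • (1 : Matrix n n ℝ) ≤ CFC.sqrt A := by
  rw [CFC.sqrt_eq_real_sqrt A hA.posSemidef.nonneg, cfcₙ_eq_cfc, ← Algebra.algebraMap_eq_smul_one]
  refine algebraMap_le_cfc _ _ _ fun x hx => ?_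
  obtain ⟨i, rfl⟩ := hA.1.spectrum_real_eq_range_eigenvalues ▸ hx
  rw [← Real.sqrt_inv]
  exact Real.sqrt_le_sqrt <|
    inv_le_of_inv_le₀ (hA.eigenvalues_pos i) (hA.inv_eigenvalues_le_norm_inv i)

lemma PosDef.norm_cfcSqrt_sub_le [Nonempty n] {A B : Matrix n n ℝ} (hA : A.PosDef)
    (hB : B.PosDef) : ‖CFC.sqrt B - CFC.sqrt A‖ ≤ √‖A⁻¹‖ * ‖A - B‖ := by
  have hp : 0 < √‖A⁻¹‖ := Real.sqrt_pos.mpr <|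
    pos_of_mul_pos_right (one_pos.trans_le (one_le_norm_mul_norm_inv hA.isUnit)) (norm_nonneg _)
  have h := add_mul_norm_sub_le_norm_mul_self_sub_mul_self
    hA.inv_sqrt_norm_inv_smul_one_le_cfcSqrt hB.inv_sqrt_norm_inv_smul_one_le_cfcSqrt
  rw [CFC.sqrt_mul_sqrt_self A hA.posSemidef.nonneg, CFC.sqrt_mul_sqrt_self B hB.posSemidef.nonneg,
    norm_sub_rev B A] at h
  rw [← inv_mul_le_iff₀ hp]
  refine le_trans ?_ h
  gcongr
  exact le_add_of_nonneg_right (by positivity)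

end Matrix

theorem inv_sqrt_lipschitz_bound_general
    (d : ℕ) (c : ℝ) :
    ∃ C : ℝ,
      ∀ (A B : Matrix (Fin d) (Fin d) ℝ) (hA : A.PosDef) (hB : B.PosDef),
        (∀ i, c ≤ hA.1.eigenvalues i) → (∀ i, c ≤ hB.1.eigenvalues i) →
        ‖(hA.posSemidef.sqrt)⁻¹ - (hB.posSemidef.sqrt)⁻¹‖ ≤
          C * Real.sqrt (max ‖A‖ ‖B‖) * ‖A⁻¹‖ * ‖B⁻¹‖ * ‖A - B‖ := by
  refine ⟨√d, fun A B hA hB _ _ => ?_⟩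
  cases isEmpty_or_nonempty (Fin d)
  · simp [Subsingleton.elim (A - B) 0, Subsingleton.elim (_ - _ : Matrix (Fin d) (Fin d) ℝ) 0]
  have hS := hA.norm_inv_cfcSqrt_sq_le
  have hT := hB.norm_inv_cfcSqrt_sq_le
  simp only [Fintype.card_fin] at hS hT
  rw [hA.posSemidef.sqrt_eq_cfcSqrt, hB.posSemidef.sqrt_eq_cfcSqrt]
  calc ‖(CFC.sqrt A)⁻¹ - (CFC.sqrt B)⁻¹‖
      = ‖(CFC.sqrt A)⁻¹ * (CFC.sqrt B - CFC.sqrt A) * (CFC.sqrt B)⁻¹‖ :=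
        congrArg norm <| inv_sub_inv <| iff_of_true
          (IsStrictlyPositive.isUnit_cfcSqrt A hA.isStrictlyPositive)
          (IsStrictlyPositive.isUnit_cfcSqrt B hB.isStrictlyPositive)
    _ ≤ ‖(CFC.sqrt A)⁻¹‖ * ‖CFC.sqrt B - CFC.sqrt A‖ * ‖(CFC.sqrt B)⁻¹‖ :=
        (frobenius_norm_mul _ _).trans (by gcongr; exact frobenius_norm_mul _ _)
    _ ≤ √(√d * ‖A⁻¹‖) * (√‖A⁻¹‖ * ‖A - B‖) * √(√d * ‖B⁻¹‖) := by
        gcongr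
        · exact Real.le_sqrt_of_sq_le hS
        · exact hA.norm_cfcSqrt_sub_le hB
        · exact Real.le_sqrt_of_sq_le hT
    _ = √d * ‖A⁻¹‖ * √‖B⁻¹‖ * ‖A - B‖ := by
        rw [Real.sqrt_mul (Real.sqrt_nonneg d), Real.sqrt_mul (Real.sqrt_nonneg d)]
        calc _ = (√√d * √√d) * (√‖A⁻¹‖ * √‖A⁻¹‖) * √‖B⁻¹‖ * ‖A - B‖ := by ring
          _ = _ := by
            rw [Real.mul_self_sqrt (Real.sqrt_nonneg d), Real.mul_self_sqrt (norm_nonneg _)]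
    _ ≤ √d * ‖A⁻¹‖ * (√(max ‖A‖ ‖B‖) * ‖B⁻¹‖) * ‖A - B‖ := by
        gcongr
        exact (sqrt_norm_inv_le_sqrt_norm_mul_norm_inv hB.isUnit).trans
          (by gcongr; exact le_max_right _ _)
    _ = √d * √(max ‖A‖ ‖B‖) * ‖A⁻¹‖ * ‖B⁻¹‖ * ‖A - B‖ := by ring

/-- For every `c > 0` there is a constant `C` (depending only on `d` and `c`)
such that for all positive definite `d × d` matrices `A, B` with all eigenvalues bounded below
by `c`, `‖A^{-1/2} − B^{-1/2}‖ ≤ C · (max{‖A‖,‖B‖})^{1/2} · ‖A⁻¹‖ · ‖B⁻¹‖ · ‖A − B‖`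
(Frobenius norm). -/
theorem inv_sqrt_lipschitz_bound
    (d : ℕ) (c : ℝ) (hc : 0 < c) :
    ∃ C : ℝ,
      ∀ (A B : Matrix (Fin d) (Fin d) ℝ) (hA : A.PosDef) (hB : B.PosDef),
        (∀ i, c ≤ hA.1.eigenvalues i) → (∀ i, c ≤ hB.1.eigenvalues i) →
        ‖(hA.posSemidef.sqrt)⁻¹ - (hB.posSemidef.sqrt)⁻¹‖ ≤
          C * Real.sqrt (max ‖A‖ ‖B‖) * ‖A⁻¹‖ * ‖B⁻¹‖ * ‖A - B‖ :=
  inv_sqrt_lipschitz_bound_general d c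
end
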